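/- Suppose (1,−1) ∈ S. Then L(x,y;t) = C(x,y;t) − w_{(1,−1)}·t·L₁(t)·C̃(x,y;t) in ℝ[x,x⁻¹,y,y⁻¹][[t]], where L counts walks in the three-quadrant cone from (p,q) never stepping directly from (0,1) to (1,0), L₁(t) counts such forbidden-step-avoiding walks ending at (0,1), and C̃ counts unrestricted-step walks in the three-quadrant cone starting at (1,0). -/
import Mathlib


open scoped Classical

/-- The three-quadrant cone `{(i,j) : i > 0 or j > 0}`. -/
def Cone (v : ℤ × ℤ) : Prop := 0 < v.1 ∨ 0 < v.2

/-- Position after `k` steps of the walk starting at `start` with step sequence `σ`. -/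
def walkPos (start : ℤ × ℤ) {n : ℕ} (σ : Fin n → ℤ × ℤ) (k : ℕ) : ℤ × ℤ :=
  start + ∑ i : Fin n, if (i : ℕ) < k then σ i else 0

/-- Total weight of walks of length `n` from `start` to `e` whose points all lie
in the three-quadrant cone: the coefficient `c(i,j;n)` of `C(x,y;t)`. -/
noncomputable def coneCount (S : Finset (ℤ × ℤ)) (w : ℤ × ℤ → ℝ) (start : ℤ × ℤ)
    (n : ℕ) (e : ℤ × ℤ) : ℝ :=
  ∑ σ : Fin n → ↥S,
    if (∀ k ≤ n, Cone (walkPos start (fun i => (σ i : ℤ × ℤ)) k)) ∧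
        walkPos start (fun i => (σ i : ℤ × ℤ)) n = e then
      ∏ i : Fin n, w (σ i) else 0

/-- Total weight of walks of length `n` from `start` whose first `n` points lie
in the cone and whose final point is `e`, outside of the cone: the exit
coefficient `h(i,j;n)`. -/
noncomputable def exitCount (S : Finset (ℤ × ℤ)) (w : ℤ × ℤ → ℝ) (start : ℤ × ℤ)
    (n : ℕ) (e : ℤ × ℤ) : ℝ :=
  ∑ σ : Fin n → ↥S,
    if (∀ k < n, Cone (walkPos start (fun i => (σ i : ℤ × ℤ)) k)) ∧
        walkPos start (fun i => (σ i : ℤ × ℤ)) n = e ∧ ¬ Cone e then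
      ∏ i : Fin n, w (σ i) else 0

/-- Total weight of walks of length `n` from `start` to `e` staying in the cone
and never stepping directly from `(0,1)` to `(1,0)`: the coefficient
`ℓ(i,j;n)` of `L(x,y;t)`. -/
noncomputable def coneCountAvoid (S : Finset (ℤ × ℤ)) (w : ℤ × ℤ → ℝ)
    (start : ℤ × ℤ) (n : ℕ) (e : ℤ × ℤ) : ℝ :=
  ∑ σ : Fin n → ↥S,
    if (∀ k ≤ n, Cone (walkPos start (fun i => (σ i : ℤ × ℤ)) k)) ∧
        walkPos start (fun i => (σ i : ℤ × ℤ)) n = e ∧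
        (∀ k < n, ¬ (walkPos start (fun i => (σ i : ℤ × ℤ)) k = (0, 1) ∧
          walkPos start (fun i => (σ i : ℤ × ℤ)) (k + 1) = (1, 0))) then
      ∏ i : Fin n, w (σ i) else 0

lemma walkPos_zero (start : ℤ × ℤ) {n : ℕ} (σ : Fin n → ℤ × ℤ) :
    walkPos start σ 0 = start := by
  simp [walkPos]

lemma walkPos_succ_eq (start : ℤ × ℤ) {n : ℕ} (g : Fin (n+1) → ℤ × ℤ) (k : ℕ) :
    walkPos start g (k + 1) = walkPos (start + g 0) (fun i : Fin n => g i.succ) k := by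
  unfold walkPos
  rw [Fin.sum_univ_succ]
  simp only [Fin.val_zero, Fin.val_succ, Nat.succ_pos, if_true, Nat.add_lt_add_iff_right,
    Nat.zero_lt_succ, ← add_assoc]

lemma cone_cond_succ (start : ℤ × ℤ) {n : ℕ} (g : Fin (n+1) → ℤ × ℤ) :
    (∀ k ≤ n+1, Cone (walkPos start g k)) ↔
      Cone start ∧ ∀ k ≤ n, Cone (walkPos (start + g 0) (fun i => g i.succ) k) := by
  constructor
  · intro h
    refine ⟨by simpa [walkPos_zero] using h 0 (Nat.zero_le _), fun k hk => ?_⟩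
    rw [← walkPos_succ_eq]
    exact h (k+1) (by omega)
  · rintro ⟨h0, h⟩ k hk
    cases k with
    | zero => simpa [walkPos_zero] using h0
    | succ k => rw [walkPos_succ_eq]; exact h k (by omega)

lemma avoid_cond_succ (start : ℤ × ℤ) {n : ℕ} (g : Fin (n+1) → ℤ × ℤ) :
    (∀ k < n+1, ¬ (walkPos start g k = (0,1) ∧ walkPos start g (k+1) = (1,0))) ↔
      ¬ (start = (0,1) ∧ start + g 0 = (1,0)) ∧
        ∀ k < n, ¬ (walkPos (start + g 0) (fun i => g i.succ) k = (0,1) ∧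
          walkPos (start + g 0) (fun i => g i.succ) (k+1) = (1,0)) := by
  constructor
  · intro h
    constructor
    · have := h 0 (by omega)
      simpa [walkPos_zero, walkPos_succ_eq] using this
    · intro k hk
      have := h (k+1) (by omega)
      rwa [walkPos_succ_eq, walkPos_succ_eq] at this
  · rintro ⟨h0, h⟩ k hk
    cases k with
    | zero => simpa [walkPos_zero, walkPos_succ_eq] using h0
    | succ k => rw [walkPos_succ_eq, walkPos_succ_eq]; exact h k (by omega)


lemma coneCount_zero (S : Finset (ℤ × ℤ)) (w : ℤ × ℤ → ℝ) (start e : ℤ × ℤ) :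
    coneCount S w start 0 e = if Cone start ∧ start = e then 1 else 0 := by
  unfold coneCount
  rw [Fintype.sum_eq_single (fun i : Fin 0 => (i.elim0 : ↥S))]
  · simp [walkPos_zero, Nat.le_zero, forall_eq]
  · intro x hx; exact absurd (funext fun i => i.elim0) hx

lemma coneCountAvoid_zero (S : Finset (ℤ × ℤ)) (w : ℤ × ℤ → ℝ) (start e : ℤ × ℤ) :
    coneCountAvoid S w start 0 e = if Cone start ∧ start = e then 1 else 0 := by
  unfold coneCountAvoid
  rw [Fintype.sum_eq_single (fun i : Fin 0 => (i.elim0 : ↥S))]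
  · simp [walkPos_zero, Nat.le_zero, forall_eq]
  · intro x hx; exact absurd (funext fun i => i.elim0) hx

lemma sum_cons_reindex {α : Type*} [Fintype α] (n : ℕ) (F : (Fin (n+1) → α) → ℝ) :
    ∑ σ : Fin (n+1) → α, F σ = ∑ s : α, ∑ τ : Fin n → α, F (Fin.cons s τ) := by
  rw [← Equiv.sum_comp (Fin.consEquiv (fun _ : Fin (n+1) => α)) F, Fintype.sum_prod_type]
  rfl

lemma cons_coe {S : Finset (ℤ × ℤ)} {n : ℕ} (s : ↥S) (τ : Fin n → ↥S) :
    (fun i => ((Fin.cons s τ : Fin (n+1) → ↥S) i : ℤ × ℤ)) =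
      Fin.cons (s : ℤ × ℤ) (fun i => (τ i : ℤ × ℤ)) := by
  funext i
  refine Fin.cases ?_ ?_ i <;> simp

lemma coneCount_succ (S : Finset (ℤ × ℤ)) (w : ℤ × ℤ → ℝ) (start : ℤ × ℤ) (n : ℕ)
    (e : ℤ × ℤ) :
    coneCount S w start (n+1) e =
      if Cone start then ∑ s : ↥S, w s * coneCount S w (start + s) n e else 0 := by
  unfold coneCount
  rw [sum_cons_reindex]
  have key : ∀ (s : ↥S) (τ : Fin n → ↥S),
      (if (∀ k ≤ n+1, Cone (walkPos start
            (fun i => ((Fin.cons s τ : Fin (n+1) → ↥S) i : ℤ × ℤ)) k)) ∧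
          walkPos start (fun i => ((Fin.cons s τ : Fin (n+1) → ↥S) i : ℤ × ℤ)) (n+1) = e then
        ∏ i : Fin (n+1), w ((Fin.cons s τ : Fin (n+1) → ↥S) i) else 0) =
      if Cone start then
        w s * (if (∀ k ≤ n, Cone (walkPos (start + (s : ℤ × ℤ)) (fun i => (τ i : ℤ × ℤ)) k)) ∧
            walkPos (start + (s : ℤ × ℤ)) (fun i => (τ i : ℤ × ℤ)) n = e then
          ∏ i : Fin n, w (τ i) else 0)
      else 0 := by
    intro s τ
    rw [cons_coe]
    have hg0 : (Fin.cons (s : ℤ × ℤ) (fun i => (τ i : ℤ × ℤ)) : Fin (n+1) → ℤ × ℤ) 0 = (s : ℤ × ℤ) := rfl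
    have hgs : (fun i : Fin n => (Fin.cons (s : ℤ × ℤ) (fun i => (τ i : ℤ × ℤ)) : Fin (n+1) → ℤ × ℤ) i.succ) =
        fun i => (τ i : ℤ × ℤ) := by funext i; simp
    simp only [walkPos_succ_eq, cone_cond_succ, hg0, hgs, and_assoc]
    have hprod : ∏ i : Fin (n+1), w ((Fin.cons s τ : Fin (n+1) → ↥S) i) =
        w s * ∏ i : Fin n, w (τ i) := by
      rw [Fin.prod_univ_succ]; simp
    split_ifs with hA hB hC hD hE
    · exact hprod
    · exact absurd hA.2 hC
    · exact absurd hA.1 hB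
    · exact absurd ⟨hD, hE⟩ hA
    · ring
    · ring
  calc ∑ s : ↥S, ∑ τ : Fin n → ↥S, _ = ∑ s : ↥S, ∑ τ : Fin n → ↥S,
        (if Cone start then
          w s * (if (∀ k ≤ n, Cone (walkPos (start + (s : ℤ × ℤ)) (fun i => (τ i : ℤ × ℤ)) k)) ∧
              walkPos (start + (s : ℤ × ℤ)) (fun i => (τ i : ℤ × ℤ)) n = e then
            ∏ i : Fin n, w (τ i) else 0)
        else 0) := by
        exact Finset.sum_congr rfl fun s _ => Finset.sum_congr rfl fun τ _ => key s τ
    _ = _ := by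
        by_cases hc : Cone start
        · simp only [hc, if_true, Finset.mul_sum]
        · simp [hc]

lemma coneCountAvoid_succ (S : Finset (ℤ × ℤ)) (w : ℤ × ℤ → ℝ) (start : ℤ × ℤ) (n : ℕ)
    (e : ℤ × ℤ) :
    coneCountAvoid S w start (n+1) e =
      if Cone start then
        ∑ s : ↥S, (if start = (0,1) ∧ start + (s : ℤ × ℤ) = (1,0) then 0
          else w s * coneCountAvoid S w (start + s) n e)
      else 0 := by
  unfold coneCountAvoid
  rw [sum_cons_reindex]
  have key : ∀ (s : ↥S) (τ : Fin n → ↥S),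
      (if (∀ k ≤ n+1, Cone (walkPos start
            (fun i => ((Fin.cons s τ : Fin (n+1) → ↥S) i : ℤ × ℤ)) k)) ∧
          walkPos start (fun i => ((Fin.cons s τ : Fin (n+1) → ↥S) i : ℤ × ℤ)) (n+1) = e ∧
          (∀ k < n+1, ¬ (walkPos start (fun i => ((Fin.cons s τ : Fin (n+1) → ↥S) i : ℤ × ℤ)) k = (0,1) ∧
            walkPos start (fun i => ((Fin.cons s τ : Fin (n+1) → ↥S) i : ℤ × ℤ)) (k+1) = (1,0))) then
        ∏ i : Fin (n+1), w ((Fin.cons s τ : Fin (n+1) → ↥S) i) else 0) =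
      if Cone start then
        (if start = (0,1) ∧ start + (s : ℤ × ℤ) = (1,0) then 0
         else w s * (if (∀ k ≤ n, Cone (walkPos (start + (s : ℤ × ℤ)) (fun i => (τ i : ℤ × ℤ)) k)) ∧
              walkPos (start + (s : ℤ × ℤ)) (fun i => (τ i : ℤ × ℤ)) n = e ∧
              (∀ k < n, ¬ (walkPos (start + (s : ℤ × ℤ)) (fun i => (τ i : ℤ × ℤ)) k = (0,1) ∧
                walkPos (start + (s : ℤ × ℤ)) (fun i => (τ i : ℤ × ℤ)) (k+1) = (1,0))) then
            ∏ i : Fin n, w (τ i) else 0))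
      else 0 := by
    intro s τ
    rw [cons_coe]
    have hg0 : (Fin.cons (s : ℤ × ℤ) (fun i => (τ i : ℤ × ℤ)) : Fin (n+1) → ℤ × ℤ) 0 = (s : ℤ × ℤ) := rfl
    have hgs : (fun i : Fin n => (Fin.cons (s : ℤ × ℤ) (fun i => (τ i : ℤ × ℤ)) : Fin (n+1) → ℤ × ℤ) i.succ) =
        fun i => (τ i : ℤ × ℤ) := by funext i; simp
    have hprod : ∏ i : Fin (n+1), w ((Fin.cons s τ : Fin (n+1) → ↥S) i) =
        w s * ∏ i : Fin n, w (τ i) := by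
      rw [Fin.prod_univ_succ]; simp
    simp only [cone_cond_succ, avoid_cond_succ]
    simp only [walkPos_succ_eq, hg0, hgs]
    by_cases hc : Cone start
    · by_cases hf : start = (0,1) ∧ start + (s : ℤ × ℤ) = (1,0)
      · rw [if_pos hc, if_pos hf, if_neg]
        rintro ⟨-, -, hforb, -⟩
        exact hforb hf
      · rw [if_pos hc, if_neg hf]
        by_cases hX : (∀ k ≤ n, Cone (walkPos (start + (s : ℤ × ℤ)) (fun i => (τ i : ℤ × ℤ)) k)) ∧
            walkPos (start + (s : ℤ × ℤ)) (fun i => (τ i : ℤ × ℤ)) n = e ∧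
            (∀ k < n, ¬ (walkPos (start + (s : ℤ × ℤ)) (fun i => (τ i : ℤ × ℤ)) k = (0,1) ∧
              walkPos (start + (s : ℤ × ℤ)) (fun i => (τ i : ℤ × ℤ)) (k+1) = (1,0)))
        · rw [if_pos hX, if_pos ⟨⟨hc, hX.1⟩, hX.2.1, hf, hX.2.2⟩, hprod]
        · rw [if_neg hX, if_neg, mul_zero]
          rintro ⟨⟨-, h1⟩, h2, -, h3⟩
          exact hX ⟨h1, h2, h3⟩
    · rw [if_neg hc, if_neg]
      rintro ⟨⟨hc', -⟩, -⟩
      exact hc hc'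
  calc (∑ s : ↥S, ∑ τ : Fin n → ↥S, _ : ℝ) = ∑ s : ↥S, ∑ τ : Fin n → ↥S,
        (if Cone start then
          (if start = (0,1) ∧ start + (s : ℤ × ℤ) = (1,0) then 0
           else w s * (if (∀ k ≤ n, Cone (walkPos (start + (s : ℤ × ℤ)) (fun i => (τ i : ℤ × ℤ)) k)) ∧
                walkPos (start + (s : ℤ × ℤ)) (fun i => (τ i : ℤ × ℤ)) n = e ∧
                (∀ k < n, ¬ (walkPos (start + (s : ℤ × ℤ)) (fun i => (τ i : ℤ × ℤ)) k = (0,1) ∧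
                  walkPos (start + (s : ℤ × ℤ)) (fun i => (τ i : ℤ × ℤ)) (k+1) = (1,0))) then
              ∏ i : Fin n, w (τ i) else 0))
        else 0) := by
        exact Finset.sum_congr rfl fun s _ => Finset.sum_congr rfl fun τ _ => key s τ
    _ = _ := by
        by_cases hc : Cone start
        · simp only [hc, if_true]
          refine Finset.sum_congr rfl fun s _ => ?_
          by_cases hf : start = (0,1) ∧ start + (s : ℤ × ℤ) = (1,0)
          · simp only [if_pos hf, Finset.sum_const_zero]
          · simp only [if_neg hf, Finset.mul_sum]
        · simp [hc]

lemma coneCountAvoid_of_not_cone (S : Finset (ℤ × ℤ)) (w : ℤ × ℤ → ℝ) {start : ℤ × ℤ}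
    (hc : ¬ Cone start) (n : ℕ) (e : ℤ × ℤ) : coneCountAvoid S w start n e = 0 := by
  unfold coneCountAvoid
  refine Finset.sum_eq_zero fun σ _ => ?_
  rw [if_neg]
  rintro ⟨h1, -⟩
  exact hc (by simpa [walkPos_zero] using h1 0 (Nat.zero_le _))

lemma coneCount_of_not_cone (S : Finset (ℤ × ℤ)) (w : ℤ × ℤ → ℝ) {start : ℤ × ℤ}
    (hc : ¬ Cone start) (n : ℕ) (e : ℤ × ℤ) : coneCount S w start n e = 0 := by
  unfold coneCount
  refine Finset.sum_eq_zero fun σ _ => ?_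
  rw [if_neg]
  rintro ⟨h1, -⟩
  exact hc (by simpa [walkPos_zero] using h1 0 (Nat.zero_le _))

lemma step_eq (s : ℤ × ℤ) : ((0:ℤ),(1:ℤ)) + s = (1,0) ↔ s = (1,-1) := by
  cases s with
  | mk a b =>
    simp only [Prod.mk_add_mk, Prod.mk.injEq]
    omega

lemma key_identity (S : Finset (ℤ × ℤ)) (w : ℤ × ℤ → ℝ)
    (hmem : ((1 : ℤ), (-1 : ℤ)) ∈ S) :
    ∀ (n : ℕ) (start e : ℤ × ℤ),
      coneCountAvoid S w start n e =
        coneCount S w start n e -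
          w (1, -1) * ∑ m ∈ Finset.range n,
            coneCountAvoid S w start m (0, 1) * coneCount S w (1, 0) (n - 1 - m) e := by
  intro n
  induction n with
  | zero =>
    intro start e
    simp [coneCount_zero, coneCountAvoid_zero]
  | succ n ih =>
    intro start e
    by_cases hc : Cone start
    · rw [coneCountAvoid_succ, coneCount_succ, if_pos hc, if_pos hc,
        Finset.sum_range_succ']
      -- rewrite the shifted sum terms
      have hshift : ∀ k ∈ Finset.range n,
          coneCountAvoid S w start (k+1) (0,1) * coneCount S w (1,0) (n+1-1-(k+1)) e =
            (∑ s : ↥S, (if start = (0,1) ∧ start + (s : ℤ × ℤ) = (1,0) then 0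
              else w s * coneCountAvoid S w (start + s) k (0,1))) *
              coneCount S w (1,0) (n-1-k) e := by
        intro k hk
        rw [coneCountAvoid_succ, if_pos hc]
        congr 2
        omega
      rw [Finset.sum_congr rfl hshift, coneCountAvoid_zero]
      -- abbreviations
      set w1 : ℝ := w (1,-1) with hw1
      -- LHS: apply ih pointwise
      have hL : ∀ s : ↥S,
          (if start = (0,1) ∧ start + (s : ℤ × ℤ) = (1,0) then 0
            else w s * coneCountAvoid S w (start + s) n e) =
          (if start = (0,1) ∧ start + (s : ℤ × ℤ) = (1,0) then 0
            else w s * coneCount S w (start + s) n e) -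
          w1 * (if start = (0,1) ∧ start + (s : ℤ × ℤ) = (1,0) then 0
            else w s * ∑ m ∈ Finset.range n,
              coneCountAvoid S w (start + s) m (0,1) * coneCount S w (1,0) (n-1-m) e) := by
        intro s
        by_cases hf : start = (0,1) ∧ start + (s : ℤ × ℤ) = (1,0)
        · simp only [if_pos hf]; ring
        · simp only [if_neg hf, ih]; ring
      rw [Finset.sum_congr rfl fun s _ => hL s, Finset.sum_sub_distrib]
      -- now pure algebra; swap the double sum on the RHS
      have hswap :
          ∑ k ∈ Finset.range n,
            (∑ s : ↥S, (if start = (0,1) ∧ start + (s : ℤ × ℤ) = (1,0) then 0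
              else w s * coneCountAvoid S w (start + s) k (0,1))) *
              coneCount S w (1,0) (n-1-k) e =
          ∑ s : ↥S, (if start = (0,1) ∧ start + (s : ℤ × ℤ) = (1,0) then 0
            else w s * ∑ m ∈ Finset.range n,
              coneCountAvoid S w (start + s) m (0,1) * coneCount S w (1,0) (n-1-m) e) := by
        calc ∑ k ∈ Finset.range n,
            (∑ s : ↥S, (if start = (0,1) ∧ start + (s : ℤ × ℤ) = (1,0) then 0
              else w s * coneCountAvoid S w (start + s) k (0,1))) *
              coneCount S w (1,0) (n-1-k) e
            = ∑ k ∈ Finset.range n, ∑ s : ↥S,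
                (if start = (0,1) ∧ start + (s : ℤ × ℤ) = (1,0) then 0
                  else w s * coneCountAvoid S w (start + s) k (0,1)) *
                  coneCount S w (1,0) (n-1-k) e := by
              exact Finset.sum_congr rfl fun k _ => Finset.sum_mul _ _ _
          _ = ∑ s : ↥S, ∑ k ∈ Finset.range n,
                (if start = (0,1) ∧ start + (s : ℤ × ℤ) = (1,0) then 0
                  else w s * coneCountAvoid S w (start + s) k (0,1)) *
                  coneCount S w (1,0) (n-1-k) e := Finset.sum_comm
          _ = _ := by
              refine Finset.sum_congr rfl fun s _ => ?_
              by_cases hf : start = (0,1) ∧ start + (s : ℤ × ℤ) = (1,0)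
              · simp only [if_pos hf, zero_mul, Finset.sum_const_zero]
              · simp only [if_neg hf, Finset.mul_sum, mul_assoc]
      have hforb : ∑ s : ↥S, (if start = (0,1) ∧ start + (s : ℤ × ℤ) = (1,0)
            then w s * coneCount S w (start + s) n e else 0) =
          (if start = (0,1) then 1 else 0) * (w1 * coneCount S w (1,0) n e) := by
        by_cases h01 : start = (0,1)
        · subst h01
          have hcond : ∀ s : ↥S, ((((0:ℤ),(1:ℤ)) : ℤ × ℤ) = (0,1) ∧
              (((0:ℤ),(1:ℤ)) : ℤ × ℤ) + (s : ℤ × ℤ) = (1,0)) ↔ s = (⟨(1,-1), hmem⟩ : ↥S) := by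
            intro s
            rw [Subtype.ext_iff]
            simp [step_eq]
          rw [Finset.sum_congr rfl fun s _ => by rw [if_congr (hcond s) rfl rfl]]
          rw [Finset.sum_ite_eq' Finset.univ (⟨(1,-1),hmem⟩ : ↥S)]
          simp only [Finset.mem_univ, if_true, if_pos rfl, one_mul]
          have hadd : (((0:ℤ),(1:ℤ)) : ℤ × ℤ) + (((1:ℤ),(-1:ℤ)) : ℤ × ℤ) = ((1:ℤ),(0:ℤ)) := by
            norm_num [Prod.ext_iff]
          rw [hadd, hw1]
        · rw [if_neg h01, zero_mul]
          exact Finset.sum_eq_zero fun s _ => if_neg (fun h => h01 h.1)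
      have hsplit : ∑ s : ↥S, (if start = (0,1) ∧ start + (s : ℤ × ℤ) = (1,0) then 0
            else w s * coneCount S w (start + s) n e) =
          ∑ s : ↥S, w s * coneCount S w (start + s) n e
            - (if start = (0,1) then 1 else 0) * (w1 * coneCount S w (1,0) n e) := by
        rw [← hforb, ← Finset.sum_sub_distrib]
        refine Finset.sum_congr rfl fun s _ => ?_
        by_cases hf : start = (0,1) ∧ start + (s : ℤ × ℤ) = (1,0)
        · simp only [if_pos hf]; ring
        · simp only [if_neg hf]; ring
      have hdelta : (if Cone start ∧ start = ((0:ℤ),(1:ℤ)) then (1:ℝ) else 0) =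
          if start = (0,1) then 1 else 0 := by
        by_cases h01 : start = ((0:ℤ),(1:ℤ))
        · rw [if_pos ⟨hc, h01⟩, if_pos h01]
        · rw [if_neg (fun h => h01 h.2), if_neg h01]
      have hidx : n + 1 - 1 - 0 = n := by omega
      rw [hsplit, hswap, hdelta, hidx, ← Finset.mul_sum]
      ring
    · rw [coneCountAvoid_succ, coneCount_succ, if_neg hc, if_neg hc]
      have : ∀ m ∈ Finset.range (n+1),
          coneCountAvoid S w start m (0,1) * coneCount S w (1,0) (n+1-1-m) e = 0 := by
        intro m _
        rw [coneCountAvoid_of_not_cone S w hc, zero_mul]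
      rw [Finset.sum_congr rfl this]
      simp


/-- If `(1,−1) ∈ S` then
`L(x,y;t) = C(x,y;t) − w_{(1,−1)}·t·L₁(t)·C̃(x,y;t)` in
`ℝ[x,x⁻¹,y,y⁻¹][[t]]`, stated coefficientwise, where `L` counts walks from
`(p,q)` in the cone never stepping from `(0,1)` to `(1,0)`, `L₁` counts such
walks ending at `(0,1)`, and `C̃` counts unrestricted-step walks in the cone
starting at `(1,0)`. -/
theorem statement18 (S : Finset (ℤ × ℤ)) (hS : S.Nonempty)
    (hSsteps : ∀ s ∈ S, s ≠ (0, 0) ∧ s.1.natAbs ≤ 1 ∧ s.2.natAbs ≤ 1)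
    (w : ℤ × ℤ → ℝ) (hw : ∀ s ∈ S, 0 < w s)
    (hmem : ((1 : ℤ), (-1 : ℤ)) ∈ S)
    (p q : ℤ) (hp : 0 < p) (hq : 0 ≤ q) :
    ∀ (n : ℕ) (i j : ℤ),
      coneCountAvoid S w (p, q) n (i, j) =
        coneCount S w (p, q) n (i, j)
          - w (1, -1) * (if n = 0 then 0 else
              ∑ m ∈ Finset.range n,
                coneCountAvoid S w (p, q) m (0, 1)
                  * coneCount S w (1, 0) (n - 1 - m) (i, j)) := by
  intro n i j
  rw [key_identity S w hmem n (p, q) (i, j)]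
  congr 2
  split_ifs with h
  · subst h; simp
  · rfl
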